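/- Define, for real λ with |λ| > 1 and λ ≠ 2 and real ν: θ̃₁(λ,ν) = ((1−λ+λ²)/(2+λ−λ²))·√(1−1/λ²)·(1−ν), θ̃₂(λ,ν) = (2−2λ−λ²)/(2λ(λ−2)) + ν·(1−λ+λ²)²/(λ(λ−2)(λ²−1)), θ̃₃(λ,ν) = ν·((1−λ+λ²)/(λ²−1))·√(λ/(λ−2)). Then for every fixed ν ∈ ℝ, both as λ → +∞ and as λ → −∞: θ̃₁(λ,ν) tends to ν−1, θ̃₂(λ,ν) tends to ν−1/2, and θ̃₃(λ,ν) tends to ν. (Thus the asymptote A₁(λ) of the touching curve C_λ tends to the line {(ν−1, ν−1/2, ν) : ν ∈ ℝ}, which is an asymptote of the edge of regression.) -/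

import Mathlib

open Filter

/-- First coordinate of the parametrization of the asymptote `A₁(λ)` of the
touching curve `C_λ`. -/
noncomputable def θ₁ (l ν : ℝ) : ℝ :=
  (1 - l + l ^ 2) / (2 + l - l ^ 2) * Real.sqrt (1 - 1 / l ^ 2) * (1 - ν)

/-- Second coordinate of the parametrization of the asymptote `A₁(λ)`. -/
noncomputable def θ₂ (l ν : ℝ) : ℝ :=
  (2 - 2 * l - l ^ 2) / (2 * l * (l - 2)) +
    ν * (1 - l + l ^ 2) ^ 2 / (l * (l - 2) * (l ^ 2 - 1))

/-- Third coordinate of the parametrization of the asymptote `A₁(λ)`. -/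
noncomputable def θ₃ (l ν : ℝ) : ℝ :=
  ν * ((1 - l + l ^ 2) / (l ^ 2 - 1)) * Real.sqrt (l / (l - 2))

noncomputable def g₁ (ν t : ℝ) : ℝ :=
  (t ^ 2 - t + 1) / (2 * t ^ 2 + t - 1) * Real.sqrt (1 - t ^ 2) * (1 - ν)

noncomputable def g₂ (ν t : ℝ) : ℝ :=
  (2 * t ^ 2 - 2 * t - 1) / (2 - 4 * t) +
    ν * (t ^ 2 - t + 1) ^ 2 / ((1 - 2 * t) * (1 - t ^ 2))

noncomputable def g₃ (ν t : ℝ) : ℝ :=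
  ν * ((t ^ 2 - t + 1) / (1 - t ^ 2)) * Real.sqrt (1 / (1 - 2 * t))

lemma g₁_cont (ν : ℝ) : ContinuousAt (g₁ ν) 0 := by
  unfold g₁
  apply ContinuousAt.mul _ continuousAt_const
  apply ContinuousAt.mul
  · exact ContinuousAt.div (by fun_prop) (by fun_prop) (by norm_num)
  · exact (Real.continuous_sqrt.continuousAt).comp (by fun_prop)

lemma g₂_cont (ν : ℝ) : ContinuousAt (g₂ ν) 0 := by
  unfold g₂
  apply ContinuousAt.add
  · exact ContinuousAt.div (by fun_prop) (by fun_prop) (by norm_num)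
  · exact ContinuousAt.div (by fun_prop) (by fun_prop) (by norm_num)

lemma g₃_cont (ν : ℝ) : ContinuousAt (g₃ ν) 0 := by
  unfold g₃
  apply ContinuousAt.mul
  · exact ContinuousAt.mul continuousAt_const
      (ContinuousAt.div (by fun_prop) (by fun_prop) (by norm_num))
  · exact (Real.continuous_sqrt.continuousAt).comp
      (ContinuousAt.div (by fun_prop) (by fun_prop) (by norm_num))

lemma g₁_zero (ν : ℝ) : g₁ ν 0 = ν - 1 := by
  simp [g₁]

lemma g₂_zero (ν : ℝ) : g₂ ν 0 = ν - 1/2 := by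
  simp [g₂]
  ring

lemma g₃_zero (ν : ℝ) : g₃ ν 0 = ν := by
  simp [g₃]

lemma inv_sq_repr (l : ℝ) (h0 : l ≠ 0) : (1 : ℝ) - (l⁻¹) ^ 2 = (l ^ 2 - 1) / l ^ 2 := by
  rw [sub_div, div_self (pow_ne_zero 2 h0), one_div, inv_pow]

lemma eq₁ (ν l : ℝ) (h0 : l ≠ 0) (hq : 2 + l - l ^ 2 ≠ 0) : θ₁ l ν = g₁ ν l⁻¹ := by
  have hq' : 2 * (l⁻¹) ^ 2 + l⁻¹ - 1 ≠ 0 := by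
    have e : 2 * (l⁻¹) ^ 2 + l⁻¹ - 1 = (2 + l - l ^ 2) / l ^ 2 := by
      field_simp
    rw [e]
    exact div_ne_zero hq (pow_ne_zero 2 h0)
  unfold θ₁ g₁
  congr 1
  congr 1
  · rw [div_eq_div_iff hq hq']
    field_simp
  · congr 1
    rw [inv_sq_repr l h0, one_div, ← inv_pow, inv_sq_repr l h0]

lemma eq₂ (ν l : ℝ) (h0 : l ≠ 0) (h2 : l - 2 ≠ 0) (h1 : l ^ 2 - 1 ≠ 0) :
    θ₂ l ν = g₂ ν l⁻¹ := by
  have hq2 : (2 : ℝ) - 4 * l⁻¹ ≠ 0 := by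
    have e : (2 : ℝ) - 4 * l⁻¹ = 2 * (l - 2) / l := by field_simp; ring
    rw [e]
    exact div_ne_zero (mul_ne_zero two_ne_zero h2) h0
  have h2'' : (1 : ℝ) - 2 * l⁻¹ ≠ 0 := by
    have e : (1 : ℝ) - 2 * l⁻¹ = (l - 2) / l := by field_simp
    rw [e]
    exact div_ne_zero h2 h0
  have h1' : (1 : ℝ) - (l⁻¹) ^ 2 ≠ 0 := by
    rw [inv_sq_repr l h0]
    exact div_ne_zero h1 (pow_ne_zero 2 h0)
  unfold θ₂ g₂
  congr 1
  · rw [div_eq_div_iff (mul_ne_zero (mul_ne_zero two_ne_zero h0) h2) hq2]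
    field_simp
    ring
  · rw [div_eq_div_iff (mul_ne_zero (mul_ne_zero h0 h2) h1) (mul_ne_zero h2'' h1')]
    field_simp

lemma eq₃ (ν l : ℝ) (h0 : l ≠ 0) (h2 : l - 2 ≠ 0) (h1 : l ^ 2 - 1 ≠ 0) :
    θ₃ l ν = g₃ ν l⁻¹ := by
  have h1' : (1 : ℝ) - (l⁻¹) ^ 2 ≠ 0 := by
    rw [inv_sq_repr l h0]
    exact div_ne_zero h1 (pow_ne_zero 2 h0)
  unfold θ₃ g₃
  congr 1
  · congr 1
    rw [div_eq_div_iff h1 h1']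
    field_simp
  · congr 1
    rw [div_eq_div_iff h2 (by
      have e : (1 : ℝ) - 2 * l⁻¹ = (l - 2) / l := by field_simp
      rw [e]
      exact div_ne_zero h2 h0)]
    field_simp

lemma evAtTop : ∀ᶠ l : ℝ in atTop,
    l ≠ 0 ∧ l - 2 ≠ 0 ∧ l ^ 2 - 1 ≠ 0 ∧ 2 + l - l ^ 2 ≠ 0 := by
  filter_upwards [eventually_ge_atTop (3 : ℝ)] with l hl
  refine ⟨by intro h; nlinarith, by intro h; nlinarith, by intro h; nlinarith,
    by intro h; nlinarith⟩

lemma evAtBot : ∀ᶠ l : ℝ in atBot,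
    l ≠ 0 ∧ l - 2 ≠ 0 ∧ l ^ 2 - 1 ≠ 0 ∧ 2 + l - l ^ 2 ≠ 0 := by
  filter_upwards [eventually_le_atBot (-2 : ℝ)] with l hl
  refine ⟨by intro h; nlinarith, by intro h; nlinarith, by intro h; nlinarith,
    by intro h; nlinarith⟩

/-- As `λ → ±∞` the asymptote `A₁(λ)` of the touching curve `C_λ` tends (pointwise
in the parameter `ν`) to the line `{(ν−1, ν−1/2, ν) : ν ∈ ℝ}`, an asymptote of the
edge of regression. -/
theorem stmt_10 (ν : ℝ) :
    (Tendsto (fun l : ℝ => θ₁ l ν) atTop (nhds (ν - 1)) ∧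
      Tendsto (fun l : ℝ => θ₁ l ν) atBot (nhds (ν - 1))) ∧
    (Tendsto (fun l : ℝ => θ₂ l ν) atTop (nhds (ν - 1/2)) ∧
      Tendsto (fun l : ℝ => θ₂ l ν) atBot (nhds (ν - 1/2))) ∧
    (Tendsto (fun l : ℝ => θ₃ l ν) atTop (nhds ν) ∧
      Tendsto (fun l : ℝ => θ₃ l ν) atBot (nhds ν)) := by
  have hTop : Tendsto (fun l : ℝ => l⁻¹) atTop (nhds (0 : ℝ)) := tendsto_inv_atTop_zero
  have hBot : Tendsto (fun l : ℝ => l⁻¹) atBot (nhds (0 : ℝ)) := by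
    have h1 : Tendsto (fun l : ℝ => (-l)⁻¹) atBot (nhds (0 : ℝ)) :=
      Tendsto.comp tendsto_inv_atTop_zero tendsto_neg_atBot_atTop
    have h2 := h1.neg
    rw [neg_zero] at h2
    refine h2.congr fun l => ?_
    rw [inv_neg, neg_neg]
  refine ⟨⟨?_, ?_⟩, ⟨?_, ?_⟩, ⟨?_, ?_⟩⟩
  · refine Tendsto.congr' ?_ ((g₁_zero ν ▸ (g₁_cont ν).tendsto).comp hTop)
    filter_upwards [evAtTop] with l ⟨h0, h2, h1, hq⟩
    exact (eq₁ ν l h0 hq).symm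
  · refine Tendsto.congr' ?_ ((g₁_zero ν ▸ (g₁_cont ν).tendsto).comp hBot)
    filter_upwards [evAtBot] with l ⟨h0, h2, h1, hq⟩
    exact (eq₁ ν l h0 hq).symm
  · refine Tendsto.congr' ?_ ((g₂_zero ν ▸ (g₂_cont ν).tendsto).comp hTop)
    filter_upwards [evAtTop] with l ⟨h0, h2, h1, hq⟩
    exact (eq₂ ν l h0 h2 h1).symm
  · refine Tendsto.congr' ?_ ((g₂_zero ν ▸ (g₂_cont ν).tendsto).comp hBot)
    filter_upwards [evAtBot] with l ⟨h0, h2, h1, hq⟩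
    exact (eq₂ ν l h0 h2 h1).symm
  · refine Tendsto.congr' ?_ ((g₃_zero ν ▸ (g₃_cont ν).tendsto).comp hTop)
    filter_upwards [evAtTop] with l ⟨h0, h2, h1, hq⟩
    exact (eq₃ ν l h0 h2 h1).symm
  · refine Tendsto.congr' ?_ ((g₃_zero ν ▸ (g₃_cont ν).tendsto).comp hBot)
    filter_upwards [evAtBot] with l ⟨h0, h2, h1, hq⟩
    exact (eq₃ ν l h0 h2 h1).symm
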